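/- Let D be an m×n diagram with N white cells, let σ = σ_D be its pipe-dream permutation of {1,…,m+n}, and let ω be the pipe-dream permutation of the all-black m×n diagram, i.e. ω(i) = m+i for 1 ≤ i ≤ n and ω(i) = i−n for n+1 ≤ i ≤ m+n. Then the kernel of the (m+n)×(m+n) matrix P_ω + P_σ over ℚ is isomorphic, as a ℚ-vector space, to the kernel of the N×N matrix M(D) over ℚ. -/

import Mathlib

/- Pipe-dream path following in an `m × n` grid of cells `(i, j)`, with rows
`i ∈ {1,…,m}` indexed top-to-bottom and columns `j ∈ {1,…,n}` left-to-right;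
`black i j = true` means cell `(i,j)` is black.  A path entering a black cell
passes straight through; a path entering a white cell from its bottom edge
leaves through its left edge, and a path entering a white cell from its right
edge leaves through its top edge.  The left edge of row `i` is labelled `i` and
the top edge of column `j` is labelled `m + j`.
`pipeExitUp m black i j` is the exit label of a path about to enter cell `(i,j)`
from below (moving up); `i = 0` means the path has exited through the top edge
of column `j`. -/
mutual
  /-- See the comment above this `mutual` block. -/
  def pipeExitUp (m : ℕ) (black : ℕ → ℕ → Bool) : ℕ → ℕ → ℕ
    | 0, j => m + j
    | _+1, 0 => 0
    | i+1, j+1 =>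
        if black (i+1) (j+1) then pipeExitUp m black i (j+1)
        else pipeExitLeft m black (i+1) j
  termination_by i j => i + j
  /-- `pipeExitLeft m black i j` is the exit label of a path about to enter cell
  `(i,j)` from the right (moving left); `j = 0` means the path has exited
  through the left edge of row `i`, which is labelled `i`. -/
  def pipeExitLeft (m : ℕ) (black : ℕ → ℕ → Bool) : ℕ → ℕ → ℕ
    | i, 0 => i
    | 0, _+1 => 0
    | i+1, j+1 =>
        if black (i+1) (j+1) then pipeExitLeft m black (i+1) j
        else pipeExitUp m black i (j+1)
  termination_by i j => i + j
end

/-- The pipe-dream permutation `σ_D`, as a function on the labels `1,…,m+n`: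
`σ_D a` is the exit label of the path starting at the bottom edge of column `a`
(for `1 ≤ a ≤ n`), resp. at the right edge of row `a - n`
(for `n + 1 ≤ a ≤ m + n`, the right edge of row `i` being labelled `n + i`). -/
def pipeFun (m n : ℕ) (black : ℕ → ℕ → Bool) (a : ℕ) : ℕ :=
  if a ≤ n then pipeExitUp m black m a else pipeExitLeft m black (a - n) n

/-- The colouring function (with 1-indexed rows and columns) of a diagram
`D : Fin m → Fin n → Bool`, where `D i j = true` means that the cell in row
`i + 1` and column `j + 1` is black (and `false` means white). -/
def blackOf {m n : ℕ} (D : Fin m → Fin n → Bool) (i j : ℕ) : Bool :=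
  if h : 1 ≤ i ∧ i ≤ m ∧ 1 ≤ j ∧ j ≤ n then D ⟨i - 1, by omega⟩ ⟨j - 1, by omega⟩
  else true

/-- The pipe-dream permutation `ω` of the all-black `m × n` diagram, as a
function on the labels `1,…,m+n`: `ω i = m + i` for `1 ≤ i ≤ n` and
`ω i = i - n` for `n + 1 ≤ i ≤ m + n`. -/
def omegaFun (m n i : ℕ) : ℕ := if i ≤ n then m + i else i - n

/-- The `N × N` skew-symmetric matrix `M(D)` associated to a diagram `D` with
`N` white cells labelled by `e : Fin N ≃ {white cells}` (rows indexed
top-to-bottom, so "strictly below" means a larger row index, and "strictly to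
the right" means a larger column index):  `M(D)[i,j] = 1` if white cell `i` is
strictly below (same column) or strictly to the right (same row) of white cell
`j`; `M(D)[i,j] = -1` if white cell `i` is strictly above or strictly to the
left of white cell `j`; and `M(D)[i,j] = 0` otherwise. -/
def cauchonMatrix {m n N : ℕ} (D : Fin m → Fin n → Bool)
    (e : Fin N ≃ {p : Fin m × Fin n // D p.1 p.2 = false}) :
    Matrix (Fin N) (Fin N) ℚ :=
  Matrix.of fun i j =>
    if ((e i).1.2 = (e j).1.2 ∧ (e j).1.1 < (e i).1.1) ∨
       ((e i).1.1 = (e j).1.1 ∧ (e j).1.2 < (e i).1.2) then 1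
    else if ((e i).1.2 = (e j).1.2 ∧ (e i).1.1 < (e j).1.1) ∨
            ((e i).1.1 = (e j).1.1 ∧ (e i).1.2 < (e j).1.2) then -1
    else 0

/-- The permutation matrix of `μ`: `P_μ[i,j] = 1` if `j = μ i` and `0`
otherwise; thus `(P_μ v) i = v (μ i)`. -/
def permMat {N : ℕ} (μ : Equiv.Perm (Fin N)) : Matrix (Fin N) (Fin N) ℚ :=
  Matrix.of fun i j => if j = μ i then 1 else 0

/-! The white cells of `D` behave like reflecting mirrors for the pipes, and a kernel vector of
`P_ω + P_σ` is the same thing as an antisymmetric choice of values at the two ends of every pipe.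
Reading such a vector `v` on the edges of the grid (each edge gets the value of `v` at the exit
label of the pipe through it), the jump across the white cell `(i, j)` between its bottom and top
edges is `2 x(i, j)` for a unique vector `x` on the white cells; the edge values are then the
signed partial sums of `x` along rows and columns, and the mirror condition at the white cells
says exactly that `M(D) x = 0`. Conversely, for `x ∈ ker M(D)` the row and column sums of `x`
define `v`. -/

open Finset Matrix

namespace PipeDream

section Pipes

variable {m : ℕ} {bl : ℕ → ℕ → Bool} {i j : ℕ}

lemma pipeExitUp_succ_succ_of_black (h : bl (i + 1) (j + 1) = true) :
    pipeExitUp m bl (i + 1) (j + 1) = pipeExitUp m bl i (j + 1) := by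
  rw [pipeExitUp.eq_3, if_pos h]

lemma pipeExitUp_succ_succ_of_white (h : bl (i + 1) (j + 1) = false) :
    pipeExitUp m bl (i + 1) (j + 1) = pipeExitLeft m bl (i + 1) j := by
  rw [pipeExitUp.eq_3, if_neg (by simp [h])]

lemma pipeExitLeft_succ_succ_of_black (h : bl (i + 1) (j + 1) = true) :
    pipeExitLeft m bl (i + 1) (j + 1) = pipeExitLeft m bl (i + 1) j := by
  rw [pipeExitLeft.eq_3, if_pos h]

lemma pipeExitLeft_succ_succ_of_white (h : bl (i + 1) (j + 1) = false) :
    pipeExitLeft m bl (i + 1) (j + 1) = pipeExitUp m bl i (j + 1) := by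
  rw [pipeExitLeft.eq_3, if_neg (by simp [h])]

end Pipes

lemma exists_of_blackOf_succ_succ_eq_false {m n : ℕ} {D : Fin m → Fin n → Bool} {a b : ℕ}
    (h : blackOf D (a + 1) (b + 1) = false) :
    ∃ (ha : a < m) (hb : b < n), D ⟨a, ha⟩ ⟨b, hb⟩ = false := by
  unfold blackOf at h
  split_ifs at h with hab
  exact ⟨by omega, by omega, h⟩

lemma blackOf_cell {m n : ℕ} (D : Fin m → Fin n → Bool) (c : Fin m × Fin n) :
    blackOf D (c.1 + 1) (c.2 + 1) = D c.1 c.2 := by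
  rw [blackOf, dif_pos (by omega)]
  rfl

/-- `v` indexed by the labels `1, …, L`, with junk value `0` at every other natural number. -/
def labelVal {L : ℕ} (v : Fin L → ℚ) (k : ℕ) : ℚ :=
  if h : 0 < k ∧ k ≤ L then v ⟨k - 1, by omega⟩ else 0

@[simp]
lemma labelVal_succ {L : ℕ} (v : Fin L → ℚ) (c : Fin L) : labelVal v (c + 1) = v c := by
  rw [labelVal, dif_pos (by omega)]
  rfl

lemma labelVal_add {L : ℕ} (v w : Fin L → ℚ) (k : ℕ) :
    labelVal (v + w) k = labelVal v k + labelVal w k := by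
  unfold labelVal; split_ifs <;> simp

lemma labelVal_smul {L : ℕ} (c : ℚ) (v : Fin L → ℚ) (k : ℕ) :
    labelVal (c • v) k = c * labelVal v k := by
  unfold labelVal; split_ifs <;> simp

lemma permMat_mulVec {L : ℕ} (μ : Equiv.Perm (Fin L)) (v : Fin L → ℚ) :
    permMat μ *ᵥ v = v ∘ μ := by
  ext c
  simp [permMat, Matrix.mulVec, dotProduct]

lemma sum_range_ite_lt_ite_gt (g : ℕ → ℚ) {a M : ℕ} (ha : a < M) :
    ∑ t ∈ range M, (if t < a then g t else if a < t then -g t else 0) =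
      ∑ t ∈ range a, g t + ∑ t ∈ range (a + 1), g t - ∑ t ∈ range M, g t := by
  have below : ∑ t ∈ range a, (if t < a then g t else if a < t then -g t else 0) =
      ∑ t ∈ range a, g t :=
    sum_congr rfl fun t ht => if_pos (mem_range.1 ht)
  have above : ∑ t ∈ Ico (a + 1) M, (if t < a then g t else if a < t then -g t else 0) =
      -∑ t ∈ Ico (a + 1) M, g t := by
    rw [← sum_neg_distrib]
    refine sum_congr rfl fun t ht => ?_
    rw [mem_Ico] at ht
    rw [if_neg (by omega), if_pos (by omega)]
  rw [← sum_range_add_sum_Ico _ (show a + 1 ≤ M by omega),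
    ← sum_range_add_sum_Ico g (show a + 1 ≤ M by omega), sum_range_succ, below, above,
    if_neg (lt_irrefl a), if_neg (lt_irrefl a)]
  ring

lemma sum_prod_ite_snd_eq {m n : ℕ} (G : ℕ → ℕ → ℚ) (b : Fin n) :
    ∑ q : Fin m × Fin n, (if q.2 = b then G q.1 q.2 else 0) = ∑ t ∈ range m, G t b := by
  rw [Fintype.sum_prod_type, ← Fin.sum_univ_eq_sum_range (G · b)]
  simp

lemma sum_prod_ite_fst_eq {m n : ℕ} (G : ℕ → ℕ → ℚ) (a : Fin m) :
    ∑ q : Fin m × Fin n, (if q.1 = a then G q.1 q.2 else 0) = ∑ t ∈ range n, G a t := by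
  rw [Fintype.sum_prod_type_right, ← Fin.sum_univ_eq_sum_range (G a ·)]
  simp

section Kernels

variable {m n N : ℕ} (D : Fin m → Fin n → Bool)
  (e : Fin N ≃ {p : Fin m × Fin n // D p.1 p.2 = false})

/-- Membership in `ker (P_ω + P_σ)` says that `v` takes opposite values at the two ends of each
pipe of `D`. -/
lemma mem_ker_permMat_add_iff {σ ω : Equiv.Perm (Fin (m + n))}
    (hσ : ∀ a : Fin (m + n), ((σ a : ℕ) + 1) = pipeFun m n (blackOf D) ((a : ℕ) + 1))
    (hω : ∀ a : Fin (m + n), ((ω a : ℕ) + 1) = omegaFun m n ((a : ℕ) + 1))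
    (v : Fin (m + n) → ℚ) :
    v ∈ LinearMap.ker (permMat ω + permMat σ).mulVecLin ↔
      (∀ j, 1 ≤ j → j ≤ n →
        labelVal v (m + j) + labelVal v (pipeExitUp m (blackOf D) m j) = 0) ∧
      (∀ i, 1 ≤ i → i ≤ m →
        labelVal v i + labelVal v (pipeExitLeft m (blackOf D) i n) = 0) := by
  have ends : ∀ c : Fin (m + n), ((permMat ω + permMat σ) *ᵥ v) c =
      labelVal v (omegaFun m n (c + 1)) + labelVal v (pipeFun m n (blackOf D) (c + 1)) := by
    intro c
    rw [Matrix.add_mulVec, permMat_mulVec, permMat_mulVec, ← hω, ← hσ]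
    simp
  rw [LinearMap.mem_ker, Matrix.mulVecLin_apply, funext_iff]
  simp only [ends, Pi.zero_apply]
  constructor
  · intro h
    constructor
    · intro j hj hjn
      have := h ⟨j - 1, by omega⟩
      rwa [Fin.val_mk, Nat.sub_add_cancel hj, omegaFun, pipeFun, if_pos hjn, if_pos hjn]
        at this
    · intro i hi him
      have := h ⟨n + i - 1, by omega⟩
      rwa [Fin.val_mk, show n + i - 1 + 1 = n + i by omega, omegaFun, pipeFun,
        if_neg (by omega), if_neg (by omega), Nat.add_sub_cancel_left] at this
  · rintro ⟨hcol, hrow⟩ c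
    unfold omegaFun pipeFun
    split_ifs with hc
    · exact hcol _ (by omega) hc
    · exact hrow _ (by omega) (by omega)

/-- `x` on the cell in row `i`, column `j` (`1`-indexed, as in `blackOf`); `0` on black cells and
off the grid. -/
def cellVal (x : Fin N → ℚ) (i j : ℕ) : ℚ :=
  if h : 1 ≤ i ∧ i ≤ m ∧ 1 ≤ j ∧ j ≤ n then
    if hw : D ⟨i - 1, by omega⟩ ⟨j - 1, by omega⟩ = false then
      x (e.symm ⟨(⟨i - 1, by omega⟩, ⟨j - 1, by omega⟩), hw⟩)
    else 0
  else 0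

lemma cellVal_of_blackOf {x : Fin N → ℚ} {i j : ℕ} (h : blackOf D i j = true) :
    cellVal D e x i j = 0 := by
  unfold cellVal
  unfold blackOf at h
  split_ifs with hij hw
  · simp_all
  · rfl
  · rfl

lemma cellVal_succ_succ (x : Fin N → ℚ) {a b : ℕ} (ha : a < m) (hb : b < n) :
    cellVal D e x (a + 1) (b + 1) =
      if hw : D ⟨a, ha⟩ ⟨b, hb⟩ = false then x (e.symm ⟨(⟨a, ha⟩, ⟨b, hb⟩), hw⟩) else 0 := by
  rw [cellVal, dif_pos (by omega)]
  rfl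

lemma cellVal_cell (x : Fin N → ℚ) (c : Fin m × Fin n) :
    cellVal D e x (c.1 + 1) (c.2 + 1) =
      if hw : D c.1 c.2 = false then x (e.symm ⟨c, hw⟩) else 0 :=
  cellVal_succ_succ D e x c.1.isLt c.2.isLt

lemma cellVal_apply (x : Fin N → ℚ) (k : Fin N) :
    cellVal D e x ((e k).1.1 + 1) ((e k).1.2 + 1) = x k := by
  rw [cellVal_cell, dif_pos (e k).2]
  simp

def colSum (x : Fin N → ℚ) (j i : ℕ) : ℚ := ∑ t ∈ range i, cellVal D e x (t + 1) j

def rowSum (x : Fin N → ℚ) (i j : ℕ) : ℚ := ∑ t ∈ range j, cellVal D e x i (t + 1)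

@[simp]
lemma colSum_zero (x : Fin N → ℚ) (j : ℕ) : colSum D e x j 0 = 0 := sum_range_zero _

@[simp]
lemma rowSum_zero (x : Fin N → ℚ) (i : ℕ) : rowSum D e x i 0 = 0 := sum_range_zero _

lemma colSum_succ (x : Fin N → ℚ) (j i : ℕ) :
    colSum D e x j (i + 1) = colSum D e x j i + cellVal D e x (i + 1) j :=
  sum_range_succ _ _

lemma rowSum_succ (x : Fin N → ℚ) (i j : ℕ) :
    rowSum D e x i (j + 1) = rowSum D e x i j + cellVal D e x i (j + 1) :=
  sum_range_succ _ _

lemma sum_mul_eq_sum_cellVal (f : Fin m × Fin n → ℚ) (x : Fin N → ℚ) :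
    ∑ l, f (e l).1 * x l = ∑ q, f q * cellVal D e x (q.1 + 1) (q.2 + 1) := by
  set g : Fin m × Fin n → ℚ := fun q => f q * cellVal D e x (q.1 + 1) (q.2 + 1)
  have hblack : ∀ q : {q : Fin m × Fin n // ¬D q.1 q.2 = false}, g q = 0 := fun q => by
    simp only [g, cellVal_cell, dif_neg q.2, mul_zero]
  calc ∑ l, f (e l).1 * x l = ∑ l, g (e l) := by simp only [g, cellVal_apply]
    _ = ∑ q, g q := by
      rw [e.sum_comp (g ·), ← Fintype.sum_subtype_add_sum_subtype
        (fun q : Fin m × Fin n => D q.1 q.2 = false) g, Fintype.sum_eq_zero _ hblack, add_zero]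

lemma cauchonMatrix_mulVec_apply (x : Fin N → ℚ) (k : Fin N) :
    (cauchonMatrix D e *ᵥ x) k =
      (colSum D e x ((e k).1.2 + 1) (e k).1.1 + colSum D e x ((e k).1.2 + 1) ((e k).1.1 + 1)
        - colSum D e x ((e k).1.2 + 1) m) +
      (rowSum D e x ((e k).1.1 + 1) (e k).1.2 + rowSum D e x ((e k).1.1 + 1) ((e k).1.2 + 1)
        - rowSum D e x ((e k).1.1 + 1) n) := by
  set p := (e k).1
  set X : ℕ → ℕ → ℚ := fun a b => cellVal D e x (a + 1) (b + 1)
  let coeff : Fin m × Fin n → ℚ := fun q =>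
    if (p.2 = q.2 ∧ q.1 < p.1) ∨ (p.1 = q.1 ∧ q.2 < p.2) then 1
    else if (p.2 = q.2 ∧ p.1 < q.1) ∨ (p.1 = q.1 ∧ p.2 < q.2) then -1 else 0
  let colPart : ℕ → ℕ → ℚ := fun t s => if t < p.1 then X t s else if p.1 < t then -X t s else 0
  let rowPart : ℕ → ℕ → ℚ := fun t s => if s < p.2 then X t s else if p.2 < s then -X t s else 0
  have coeff_split : ∀ q : Fin m × Fin n, coeff q * X q.1 q.2 =
      (if q.2 = p.2 then colPart q.1 q.2 else 0) + (if q.1 = p.1 then rowPart q.1 q.2 else 0) := by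
    intro q
    simp only [coeff, colPart, rowPart, Fin.ext_iff, Fin.lt_def]
    split_ifs <;> first | (exfalso; omega) | ring1
  calc (cauchonMatrix D e *ᵥ x) k = ∑ q, coeff q * X q.1 q.2 :=
        sum_mul_eq_sum_cellVal D e coeff x
    _ = ∑ q : Fin m × Fin n, (if q.2 = p.2 then colPart q.1 q.2 else 0) +
        ∑ q : Fin m × Fin n, (if q.1 = p.1 then rowPart q.1 q.2 else 0) := by
      rw [← sum_add_distrib]
      exact sum_congr rfl fun q _ => coeff_split q
    _ = _ := by
      rw [sum_prod_ite_snd_eq, sum_prod_ite_fst_eq, sum_range_ite_lt_ite_gt _ p.1.isLt,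
        sum_range_ite_lt_ite_gt _ p.2.isLt]
      rfl

lemma balance_of_mulVec_eq_zero {x : Fin N → ℚ} (hx : cauchonMatrix D e *ᵥ x = 0) {a b : ℕ}
    (h : blackOf D (a + 1) (b + 1) = false) :
    (colSum D e x (b + 1) a + colSum D e x (b + 1) (a + 1) - colSum D e x (b + 1) m) +
      (rowSum D e x (a + 1) b + rowSum D e x (a + 1) (b + 1) - rowSum D e x (a + 1) n) = 0 := by
  obtain ⟨ha, hb, hD⟩ := exists_of_blackOf_succ_succ_eq_false h
  have := congrFun hx (e.symm ⟨(⟨a, ha⟩, ⟨b, hb⟩), hD⟩)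
  rwa [cauchonMatrix_mulVec_apply, Equiv.apply_symm_apply] at this

/-- Half the jump of `v` across each white cell, between the pipes through its bottom and top
edges. -/
def cellsOfLabels : (Fin (m + n) → ℚ) →ₗ[ℚ] Fin N → ℚ where
  toFun v k := (labelVal v (pipeExitUp m (blackOf D) ((e k).1.1 + 1) ((e k).1.2 + 1)) -
    labelVal v (pipeExitUp m (blackOf D) (e k).1.1 ((e k).1.2 + 1))) / 2
  map_add' v w := by
    ext k
    simp only [labelVal_add, Pi.add_apply]
    ring
  map_smul' c v := by
    ext k
    simp only [labelVal_smul, Pi.smul_apply, smul_eq_mul, RingHom.id_apply]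
    ring

def labelsOfCells (x : Fin N → ℚ) : Fin (m + n) → ℚ := fun c =>
  if (c : ℕ) < m then rowSum D e x (c + 1) n else -colSum D e x (c + 1 - m) m

lemma two_mul_cellVal_cellsOfLabels (v : Fin (m + n) → ℚ) (i j : ℕ) :
    2 * cellVal D e (cellsOfLabels D e v) (i + 1) (j + 1) =
      labelVal v (pipeExitUp m (blackOf D) (i + 1) (j + 1)) -
        labelVal v (pipeExitUp m (blackOf D) i (j + 1)) := by
  cases h : blackOf D (i + 1) (j + 1) with
  | true => rw [cellVal_of_blackOf D e h, pipeExitUp_succ_succ_of_black h, sub_self, mul_zero]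
  | false =>
    obtain ⟨ha, hb, hD⟩ := exists_of_blackOf_succ_succ_eq_false h
    rw [cellVal_succ_succ D e _ ha hb, dif_pos hD]
    simp only [cellsOfLabels, LinearMap.coe_mk, AddHom.coe_mk, Equiv.apply_symm_apply]
    ring

lemma labelVal_pipeExitUp_cellsOfLabels (v : Fin (m + n) → ℚ) (i j : ℕ) :
    labelVal v (pipeExitUp m (blackOf D) i (j + 1)) =
      labelVal v (m + (j + 1)) + 2 * colSum D e (cellsOfLabels D e v) (j + 1) i := by
  induction i with
  | zero => simp [pipeExitUp.eq_1]
  | succ i ih =>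
    have jump := two_mul_cellVal_cellsOfLabels D e v i j
    rw [colSum_succ]
    linarith

lemma labelVal_pipeExitLeft_cellsOfLabels (v : Fin (m + n) → ℚ) (i j : ℕ) :
    labelVal v (pipeExitLeft m (blackOf D) (i + 1) j) =
      labelVal v (i + 1) - 2 * rowSum D e (cellsOfLabels D e v) (i + 1) j := by
  induction j with
  | zero => simp [pipeExitLeft.eq_1]
  | succ j ih =>
    rw [rowSum_succ]
    cases h : blackOf D (i + 1) (j + 1) with
    | true =>
      rw [pipeExitLeft_succ_succ_of_black h, cellVal_of_blackOf D e h, ih]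
      ring
    | false =>
      have jump := two_mul_cellVal_cellsOfLabels D e v i j
      rw [pipeExitUp_succ_succ_of_white h] at jump
      rw [pipeExitLeft_succ_succ_of_white h]
      linarith

lemma labelVal_labelsOfCells_of_le (x : Fin N → ℚ) {i : ℕ} (hi : 1 ≤ i) (him : i ≤ m) :
    labelVal (labelsOfCells D e x) i = rowSum D e x i n := by
  rw [labelVal, dif_pos (by omega), labelsOfCells, if_pos (by simp only; omega)]
  simp only [Nat.sub_add_cancel hi]

lemma labelVal_labelsOfCells_add (x : Fin N → ℚ) {j : ℕ} (hj : 1 ≤ j) (hjn : j ≤ n) :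
    labelVal (labelsOfCells D e x) (m + j) = -colSum D e x j m := by
  rw [labelVal, dif_pos (by omega), labelsOfCells, if_neg (by simp only; omega)]
  simp only [show m + j - 1 + 1 - m = j by omega]

/-- `v` and `x` are compatible when, on every edge of the grid, the value of `v` at the exit label
of the pipe through that edge is the signed partial sum of `x` along the column (for a horizontal
edge) or the row (for a vertical edge) of that edge. -/
def IsCompatible (v : Fin (m + n) → ℚ) (x : Fin N → ℚ) : Prop :=
  (∀ i j, i ≤ m → 1 ≤ j → j ≤ n →
    labelVal v (pipeExitUp m (blackOf D) i j) = 2 * colSum D e x j i - colSum D e x j m) ∧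
  (∀ i j, 1 ≤ i → i ≤ m → j ≤ n →
    labelVal v (pipeExitLeft m (blackOf D) i j) = rowSum D e x i n - 2 * rowSum D e x i j)

variable {D e}

lemma isCompatible_cellsOfLabels {σ ω : Equiv.Perm (Fin (m + n))}
    (hσ : ∀ a : Fin (m + n), ((σ a : ℕ) + 1) = pipeFun m n (blackOf D) ((a : ℕ) + 1))
    (hω : ∀ a : Fin (m + n), ((ω a : ℕ) + 1) = omegaFun m n ((a : ℕ) + 1))
    {v : Fin (m + n) → ℚ} (hv : v ∈ LinearMap.ker (permMat ω + permMat σ).mulVecLin) :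
    IsCompatible D e v (cellsOfLabels D e v) := by
  obtain ⟨hcol, hrow⟩ := (mem_ker_permMat_add_iff D hσ hω v).1 hv
  constructor
  · intro i j _ hj hjn
    obtain ⟨j, rfl⟩ := Nat.exists_eq_add_of_le' hj
    have bottom := hcol (j + 1) hj hjn
    rw [labelVal_pipeExitUp_cellsOfLabels] at bottom ⊢
    linarith
  · intro i j hi him _
    obtain ⟨i, rfl⟩ := Nat.exists_eq_add_of_le' hi
    have right := hrow (i + 1) hi him
    rw [labelVal_pipeExitLeft_cellsOfLabels] at right ⊢
    linarith

lemma isCompatible_labelsOfCells {x : Fin N → ℚ} (hx : cauchonMatrix D e *ᵥ x = 0) :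
    IsCompatible D e (labelsOfCells D e x) x := by
  -- Induction along the pipes; where a pipe turns at a white cell, the row and column formulas
  -- agree precisely because the entry of `M(D) x` at that cell vanishes.
  refine pipeExitUp.mutual_induct (blackOf D) _ _ ?_ ?_ ?_ ?_ ?_ ?_ ?_ ?_
  · intro j _ hj hjn
    rw [pipeExitUp.eq_1, labelVal_labelsOfCells_add D e x hj hjn, colSum_zero]
    ring
  · intro _ _ h
    omega
  · intro i j hb ih hi hj hjn
    rw [pipeExitUp_succ_succ_of_black hb, ih (by omega) hj hjn, colSum_succ,
      cellVal_of_blackOf D e hb]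
    ring
  · intro i j hw ih hi _ hjn
    rw [Bool.not_eq_true] at hw
    rw [pipeExitUp_succ_succ_of_white hw, ih (by omega) hi (by omega)]
    have balance := balance_of_mulVec_eq_zero D e hx hw
    have hc := colSum_succ D e x (j + 1) i
    have hr := rowSum_succ D e x (i + 1) j
    linarith
  · intro i hi him _
    rw [pipeExitLeft.eq_1, labelVal_labelsOfCells_of_le D e x hi him, rowSum_zero]
    ring
  · intro _ h
    omega
  · intro i j hb ih hi him hj
    rw [pipeExitLeft_succ_succ_of_black hb, ih hi him (by omega), rowSum_succ,
      cellVal_of_blackOf D e hb]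
    ring
  · intro i j hw ih _ him hj
    rw [Bool.not_eq_true] at hw
    rw [pipeExitLeft_succ_succ_of_white hw, ih (by omega) (by omega) (by omega)]
    have balance := balance_of_mulVec_eq_zero D e hx hw
    have hc := colSum_succ D e x (j + 1) i
    have hr := rowSum_succ D e x (i + 1) j
    linarith

namespace IsCompatible

variable {v : Fin (m + n) → ℚ} {x : Fin N → ℚ}

lemma cellsOfLabels_eq (h : IsCompatible D e v x) : cellsOfLabels D e v = x := by
  ext k
  have ha := (e k).1.1.isLt
  have hb := (e k).1.2.isLt
  rw [← cellVal_apply D e x k]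
  simp only [cellsOfLabels, LinearMap.coe_mk, AddHom.coe_mk]
  rw [h.1 _ _ ha (by omega) hb, h.1 _ _ (by omega) (by omega) hb, colSum_succ]
  ring

lemma labelsOfCells_eq (h : IsCompatible D e v x) : labelsOfCells D e x = v := by
  ext c
  rw [labelsOfCells]
  split_ifs with hc
  · have left := h.2 (c + 1) 0 (by omega) hc (by omega)
    rw [pipeExitLeft.eq_1, labelVal_succ, rowSum_zero] at left
    linarith
  · have top := h.1 0 (c + 1 - m) (by omega) (by omega) (by omega)
    rw [pipeExitUp.eq_1, show m + (c + 1 - m) = c + 1 by omega, labelVal_succ, colSum_zero] at top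
    linarith

lemma mulVec_eq_zero (h : IsCompatible D e v x) : cauchonMatrix D e *ᵥ x = 0 := by
  ext k
  rw [cauchonMatrix_mulVec_apply, Pi.zero_apply]
  have hw : blackOf D ((e k).1.1 + 1) ((e k).1.2 + 1) = false :=
    (blackOf_cell D (e k).1).trans (e k).2
  set a : ℕ := ((e k).1.1 : ℕ)
  set b : ℕ := ((e k).1.2 : ℕ)
  have ha : a < m := (e k).1.1.isLt
  have hb : b < n := (e k).1.2.isLt
  have bottom := h.1 (a + 1) (b + 1) ha (by omega) hb
  have top := h.1 a (b + 1) ha.le (by omega) hb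
  have right := h.2 (a + 1) (b + 1) (by omega) ha hb
  have left := h.2 (a + 1) b (by omega) ha hb.le
  rw [pipeExitUp_succ_succ_of_white hw] at bottom
  rw [pipeExitLeft_succ_succ_of_white hw] at right
  linarith

lemma mem_ker {σ ω : Equiv.Perm (Fin (m + n))}
    (hσ : ∀ a : Fin (m + n), ((σ a : ℕ) + 1) = pipeFun m n (blackOf D) ((a : ℕ) + 1))
    (hω : ∀ a : Fin (m + n), ((ω a : ℕ) + 1) = omegaFun m n ((a : ℕ) + 1))
    (h : IsCompatible D e v x) : v ∈ LinearMap.ker (permMat ω + permMat σ).mulVecLin := by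
  rw [mem_ker_permMat_add_iff D hσ hω]
  constructor
  · intro j hj hjn
    have top := h.1 0 j (by omega) hj hjn
    have bottom := h.1 m j le_rfl hj hjn
    rw [pipeExitUp.eq_1, colSum_zero] at top
    linarith
  · intro i hi him
    have left := h.2 i 0 hi him (by omega)
    have right := h.2 i n hi him le_rfl
    rw [pipeExitLeft.eq_1, rowSum_zero] at left
    linarith

end IsCompatible

end Kernels

end PipeDream

open PipeDream

/-- For an `m × n` diagram `D` with `N` white cells, pipe-dream permutation `σ`
and `ω` the pipe-dream permutation of the all-black diagram, the kernel of
`P_ω + P_σ` over `ℚ` is isomorphic, as a `ℚ`-vector space, to the kernel of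
`M(D)` over `ℚ`. -/
theorem kernel_permMatrix_equiv_kernel_cauchonMatrix
    (m n N : ℕ) (hm : 0 < m) (hn : 0 < n) (D : Fin m → Fin n → Bool)
    (e : Fin N ≃ {p : Fin m × Fin n // D p.1 p.2 = false})
    (σ : Equiv.Perm (Fin (m + n)))
    (hσ : ∀ a : Fin (m + n), ((σ a : ℕ) + 1) = pipeFun m n (blackOf D) ((a : ℕ) + 1))
    (ω : Equiv.Perm (Fin (m + n)))
    (hω : ∀ a : Fin (m + n), ((ω a : ℕ) + 1) = omegaFun m n ((a : ℕ) + 1)) :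
    Nonempty (LinearMap.ker (permMat ω + permMat σ).mulVecLin ≃ₗ[ℚ]
      LinearMap.ker (cauchonMatrix D e).mulVecLin) :=
  ⟨{ (cellsOfLabels D e).restrict fun _ hv =>
        LinearMap.mem_ker.2 (isCompatible_cellsOfLabels hσ hω hv).mulVec_eq_zero with
      invFun := fun x =>
        ⟨labelsOfCells D e x, (isCompatible_labelsOfCells (LinearMap.mem_ker.1 x.2)).mem_ker hσ hω⟩
      left_inv := fun v => Subtype.ext (isCompatible_cellsOfLabels hσ hω v.2).labelsOfCells_eq
      right_inv := fun x =>
        Subtype.ext (isCompatible_labelsOfCells (LinearMap.mem_ker.1 x.2)).cellsOfLabels_eq }⟩
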